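/- In the type D_n root system (n > 3) with compactness given by the parity rule and with the property that exactly one of α_{n−1}, α_n is non-compact (Vogan diagram of so*(2n)), no simple root of the compact subsystem has the form α_l + ⋯ + α_n (l < n−1) or α_l + ⋯ + α_{m−1} + 2(α_m + ⋯ + α_{n−2}) + α_{n−1} + α_n. -/

import Mathlib

open Finset

/-- Standard basis vector `e i` of `ℕ → ℝ`. -/
noncomputable def e (i : ℕ) : ℕ → ℝ := Pi.single i 1

/-- Simple roots of type `D_n`: `α_i = e_i - e_{i+1}` for `i < n`, `α_n = e_{n-1} + e_n`. -/
noncomputable def αD (n i : ℕ) : ℕ → ℝ := if i < n then e i - e (i+1) else e (n-1) + e n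

/-- Positive roots of type `D_n`: `e_i ± e_j` for `1 ≤ i < j ≤ n`. -/
def DposRoots (n : ℕ) : Set (ℕ → ℝ) :=
  {v | ∃ i j, 1 ≤ i ∧ i < j ∧ j ≤ n ∧ (v = e i - e j ∨ v = e i + e j)}

lemma eApp (i t : ℕ) : e i t = if t = i then (1:ℝ) else 0 := by
  simp [e, Pi.single_apply]

lemma eIcc (i : ℕ) (s : Finset ℕ) : ∑ t ∈ s, e i t = if i ∈ s then (1:ℝ) else 0 := by
  simp only [eApp]
  exact Finset.sum_ite_eq' s i (fun _ => 1)

lemma tele (n : ℕ) : ∀ b a, 1 ≤ a → a ≤ b → b ≤ n-1 →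
    ∑ k ∈ Icc a b, αD n k = e a - e (b+1) := by
  intro b
  induction b with
  | zero => intro a h1 h2 h3; omega
  | succ b ih =>
    intro a h1 h2 h3
    rcases Nat.lt_or_ge a (b+1) with h | h
    · rw [Finset.sum_Icc_succ_top (by omega), ih a h1 (by omega) (by omega)]
      have hb : b + 1 < n := by omega
      simp only [αD, if_pos hb]
      abel
    · have : a = b + 1 := by omega
      subst this
      rw [Finset.Icc_self, Finset.sum_singleton]
      have hb : b + 1 < n := by omega
      simp only [αD, if_pos hb]

lemma lin_indep (n : ℕ) (hn : 3 < n) (g : ℕ → ℝ)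
    (h : ∑ i ∈ Icc 1 n, g i • αD n i = 0) : ∀ i ∈ Icc 1 n, g i = 0 := by
  have h0 : ∀ t, ∑ i ∈ Icc 1 n, g i * αD n i t = 0 := by
    intro t
    have := congrFun h t
    simpa [Finset.sum_apply] using this
  have key : ∀ j, ∑ i ∈ Icc 1 n, g i * (∑ t ∈ Icc 1 j, αD n i t) = 0 := by
    intro j
    rw [show (∑ i ∈ Icc 1 n, g i * ∑ t ∈ Icc 1 j, αD n i t)
        = ∑ i ∈ Icc 1 n, ∑ t ∈ Icc 1 j, g i * αD n i t from
      Finset.sum_congr rfl (fun i _ => Finset.mul_sum _ _ _), Finset.sum_comm]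
    simp [h0]
  have hmid : ∀ j, 1 ≤ j → j ≤ n-2 → g j = 0 := by
    intro j h1 h2
    have := key j
    rw [Finset.sum_congr rfl (g := fun i => g i * (if i = j then (1:ℝ) else 0))
      (fun i hi => by
        simp only [Finset.mem_Icc] at hi
        congr 1
        by_cases hin : i < n
        · simp only [αD, if_pos hin, Pi.sub_apply, Finset.sum_sub_distrib, eIcc,
            Finset.mem_Icc]
          split_ifs <;> norm_num <;> omega
        · simp only [αD, if_neg hin, Pi.add_apply, Finset.sum_add_distrib, eIcc,
            Finset.mem_Icc]
          split_ifs <;> norm_num <;> omega)] at this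
    simp only [mul_ite, mul_one, mul_zero, Finset.sum_ite_eq' (Icc 1 n) j g] at this
    rw [if_pos (by simp only [Finset.mem_Icc]; omega)] at this
    exact this
  have hn0 : g n = 0 := by
    have := key n
    rw [Finset.sum_congr rfl (g := fun i => g i * (if i = n then (2:ℝ) else 0))
      (fun i hi => by
        simp only [Finset.mem_Icc] at hi
        congr 1
        by_cases hin : i < n
        · simp only [αD, if_pos hin, Pi.sub_apply, Finset.sum_sub_distrib, eIcc,
            Finset.mem_Icc]
          split_ifs <;> norm_num <;> omega
        · simp only [αD, if_neg hin, Pi.add_apply, Finset.sum_add_distrib, eIcc,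
            Finset.mem_Icc]
          split_ifs <;> norm_num <;> omega)] at this
    simp only [mul_ite, mul_zero, Finset.sum_ite_eq' (Icc 1 n) n (fun i => g i * 2)] at this
    rw [if_pos (by simp only [Finset.mem_Icc]; omega)] at this
    linarith
  have hn1 : g (n-1) = 0 := by
    have := h0 n
    rw [Finset.sum_congr rfl (g := fun i => g i *
        ((if i = n then (1:ℝ) else 0) - (if i = n-1 then (1:ℝ) else 0)))
      (fun i hi => by
        simp only [Finset.mem_Icc] at hi
        congr 1
        by_cases hin : i < n
        · simp only [αD, if_pos hin, Pi.sub_apply, eApp]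
          split_ifs <;> norm_num <;> omega
        · simp only [αD, if_neg hin, Pi.add_apply, eApp]
          split_ifs <;> norm_num <;> omega)] at this
    simp only [mul_sub, mul_ite, mul_one, mul_zero, Finset.sum_sub_distrib,
      Finset.sum_ite_eq' (Icc 1 n)] at this
    rw [if_pos (by simp only [Finset.mem_Icc]; omega),
        if_pos (by simp only [Finset.mem_Icc]; omega)] at this
    rw [hn0] at this
    linarith
  intro i hi
  simp only [Finset.mem_Icc] at hi
  rcases Nat.lt_or_ge i (n-1) with h' | h'
  · exact hmid i hi.1 (by omega)
  · rcases Nat.lt_or_ge i n with h'' | h''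
    · have : i = n-1 := by omega
      rw [this]; exact hn1
    · have : i = n := by omega
      rw [this]; exact hn0

lemma coeff_unique (n : ℕ) (hn : 3 < n) (c d : ℕ → ℤ)
    (h : ∑ i ∈ Icc 1 n, (c i : ℝ) • αD n i = ∑ i ∈ Icc 1 n, (d i : ℝ) • αD n i) :
    ∀ i ∈ Icc 1 n, c i = d i := by
  intro i hi
  have := lin_indep n hn (fun i => (c i : ℝ) - (d i : ℝ)) (by
    simp only [sub_smul, Finset.sum_sub_distrib, h, sub_self]) i hi
  have h2 : (c i : ℝ) = (d i : ℝ) := by linarith [this]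
  exact_mod_cast h2

lemma rep_cInd (n : ℕ) (s : Finset ℕ) (hs : s ⊆ Icc 1 n) :
    ∑ i ∈ Icc 1 n, (((if i ∈ s then (1:ℤ) else 0) : ℤ) : ℝ) • αD n i
      = ∑ i ∈ s, αD n i := by
  rw [← Finset.sum_subset hs (fun x _ hx => by simp [hx])]
  exact Finset.sum_congr rfl (fun i hi => by simp [hi])

lemma repMinus (n a : ℕ) (hn : 3 < n) (h1 : 1 ≤ a) (h2 : a ≤ n-1) :
    ∑ i ∈ Icc 1 n, (((if i ∈ Icc a (n-1) then (1:ℤ) else 0) : ℤ) : ℝ) • αD n i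
      = e a - e n := by
  rw [rep_cInd n _ (fun x hx => by simp only [Finset.mem_Icc] at *; omega),
      tele n (n-1) a h1 h2 le_rfl, show n-1+1 = n from by omega]

lemma repN (n : ℕ) (hn : 3 < n) :
    ∑ i ∈ Icc 1 n, (((if i ∈ Icc n n then (1:ℤ) else 0) : ℤ) : ℝ) • αD n i
      = e (n-1) + e n := by
  rw [rep_cInd n _ (fun x hx => by simp only [Finset.mem_Icc] at *; omega),
      Finset.Icc_self, Finset.sum_singleton]
  simp [αD]

lemma repN1 (n : ℕ) (hn : 3 < n) :
    ∑ i ∈ Icc 1 n, (((if i ∈ Icc (n-1) (n-1) then (1:ℤ) else 0) : ℤ) : ℝ) • αD n i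
      = e (n-1) - e n := by
  rw [rep_cInd n _ (fun x hx => by simp only [Finset.mem_Icc] at *; omega),
      Finset.Icc_self, Finset.sum_singleton]
  rw [αD, if_pos (by omega), show n-1+1 = n from by omega]

lemma repPlus (n a : ℕ) (hn : 3 < n) (h1 : 1 ≤ a) (h2 : a ≤ n-2) :
    ∑ i ∈ Icc 1 n, ((((if i ∈ Icc a (n-2) then (1:ℤ) else 0)
        + (if i ∈ Icc n n then 1 else 0)) : ℤ) : ℝ) • αD n i
      = e a + e n := by
  rw [Finset.sum_congr rfl (g := fun i =>
      (((if i ∈ Icc a (n-2) then (1:ℤ) else 0) : ℤ) : ℝ) • αD n i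
      + (((if i ∈ Icc n n then (1:ℤ) else 0) : ℤ) : ℝ) • αD n i)
      (fun i _ => by push_cast; rw [add_smul]),
    Finset.sum_add_distrib,
    rep_cInd n _ (fun x hx => by simp only [Finset.mem_Icc] at *; omega),
    tele n (n-2) a h1 h2 (by omega), show n-2+1 = n-1 from by omega,
    repN n hn]
  abel

lemma repγ1 (n l : ℕ) (hn : 3 < n) (h1 : 1 ≤ l) (h2 : l < n-1) :
    ∑ i ∈ Icc 1 n, ((((if i ∈ Icc l (n-1) then (1:ℤ) else 0)
        + (if i ∈ Icc n n then 1 else 0)) : ℤ) : ℝ) • αD n i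
      = e l + e (n-1) := by
  rw [Finset.sum_congr rfl (g := fun i =>
      (((if i ∈ Icc l (n-1) then (1:ℤ) else 0) : ℤ) : ℝ) • αD n i
      + (((if i ∈ Icc n n then (1:ℤ) else 0) : ℤ) : ℝ) • αD n i)
      (fun i _ => by push_cast; rw [add_smul]),
    Finset.sum_add_distrib, repMinus n l hn h1 (by omega), repN n hn]
  abel

lemma repγ2 (n l m : ℕ) (hn : 3 < n) (h1 : 1 ≤ l) (h2 : l < m) (h3 : m < n-1) :
    ∑ i ∈ Icc 1 n, ((((if i ∈ Icc l (m-1) then (1:ℤ) else 0)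
        + 2 * (if i ∈ Icc m (n-2) then 1 else 0)
        + (if i ∈ Icc (n-1) (n-1) then 1 else 0)
        + (if i ∈ Icc n n then 1 else 0)) : ℤ) : ℝ) • αD n i
      = e l + e m := by
  rw [Finset.sum_congr rfl (g := fun i =>
      (((if i ∈ Icc l (m-1) then (1:ℤ) else 0) : ℤ) : ℝ) • αD n i
      + ((2:ℝ) • ((((if i ∈ Icc m (n-2) then (1:ℤ) else 0) : ℤ) : ℝ) • αD n i)
      + ((((if i ∈ Icc (n-1) (n-1) then (1:ℤ) else 0) : ℤ) : ℝ) • αD n i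
      + (((if i ∈ Icc n n then (1:ℤ) else 0) : ℤ) : ℝ) • αD n i)))
      (fun i _ => by push_cast; module),
    Finset.sum_add_distrib, Finset.sum_add_distrib, Finset.sum_add_distrib,
    ← Finset.smul_sum,
    rep_cInd n (Icc l (m-1)) (fun x hx => by simp only [Finset.mem_Icc] at *; omega),
    tele n (m-1) l h1 (by omega) (by omega), show m-1+1 = m from by omega,
    rep_cInd n (Icc m (n-2)) (fun x hx => by simp only [Finset.mem_Icc] at *; omega),
    tele n (n-2) m (by omega) (by omega) (by omega), show n-2+1 = n-1 from by omega,
    repN1 n hn, repN n hn]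
  module

lemma val1 (n l : ℕ) (hn : 3 < n) (h1 : 1 ≤ l) (h2 : l < n-1) :
    ∑ k ∈ Icc l n, αD n k = e l + e (n-1) := by
  have hins : Icc l n = insert n (Icc l (n-1)) := by
    ext x; simp only [Finset.mem_Icc, Finset.mem_insert]; omega
  rw [hins, Finset.sum_insert (by simp only [Finset.mem_Icc]; omega),
      tele n (n-1) l h1 (by omega) le_rfl, show n-1+1 = n from by omega]
  rw [αD, if_neg (lt_irrefl n)]
  abel

lemma val2 (n l m : ℕ) (hn : 3 < n) (h1 : 1 ≤ l) (h2 : l < m) (h3 : m < n-1) :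
    ∑ k ∈ Icc l (m-1), αD n k + 2 • ∑ k ∈ Icc m (n-2), αD n k
      + αD n (n-1) + αD n n = e l + e m := by
  rw [tele n (m-1) l h1 (by omega) (by omega), show m-1+1 = m from by omega,
      tele n (n-2) m (by omega) (by omega) (by omega), show n-2+1 = n-1 from by omega]
  rw [show αD n (n-1) = e (n-1) - e n from by
        rw [αD, if_pos (by omega), show n-1+1 = n from by omega],
      show αD n n = e (n-1) + e n from by rw [αD, if_neg (lt_irrefl n)]]
  module

/-- in type `D_n` (`n > 3`) with compactness given by the parity
rule for a set `S` of non-compact simple-root indices such that exactly one of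
`α_{n-1}, α_n` is non-compact (Vogan diagram of `so*(2n)`), no simple root of
the compact subsystem (compact positive root not a sum of two compact positive
roots) has the form `α_l + ⋯ + α_n` (`l < n-1`) or
`α_l + ⋯ + α_{m-1} + 2(α_m + ⋯ + α_{n-2}) + α_{n-1} + α_n`. -/
theorem stmt18 (n : ℕ) (hn : 3 < n) (S : Finset ℕ) (hS : S ⊆ Icc 1 n)
    (hone : ((n-1) ∈ S ∧ n ∉ S) ∨ ((n-1) ∉ S ∧ n ∈ S))
    (coeffs : (ℕ → ℝ) → ℕ → ℤ)
    (hcoeffs : ∀ β ∈ DposRoots n, β = ∑ i ∈ Icc 1 n, (coeffs β i : ℝ) • αD n i)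
    (compact : (ℕ → ℝ) → Prop)
    (hcompact : ∀ β, compact β ↔ Even (∑ j ∈ S, coeffs β j))
    (γ : ℕ → ℝ) (hγ : γ ∈ DposRoots n) (hγc : compact γ)
    (hmin : ¬ ∃ a b, a ∈ DposRoots n ∧ b ∈ DposRoots n ∧
      compact a ∧ compact b ∧ γ = a + b) :
    ¬ ((∃ l, 1 ≤ l ∧ l < n - 1 ∧ γ = ∑ k ∈ Icc l n, αD n k) ∨
       (∃ l m, 1 ≤ l ∧ l < m ∧ m < n - 1 ∧
         γ = ∑ k ∈ Icc l (m-1), αD n k + 2 • ∑ k ∈ Icc m (n-2), αD n k +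
             αD n (n-1) + αD n n)) := by
  -- abbreviation for interval counts in S
  set Q : ℕ → ℕ → ℤ := fun a b => ∑ j ∈ S, (if j ∈ Icc a b then (1:ℤ) else 0) with hQdef
  have hQsplit : ∀ a b c : ℕ, a ≤ b → b < c → Q a c = Q a b + Q (b+1) c := by
    intro a b c hab hbc
    rw [hQdef]
    simp only [← Finset.sum_add_distrib]
    exact Finset.sum_congr rfl (fun j _ => by
      simp only [Finset.mem_Icc]; split_ifs <;> omega)
  have hQsingle : ∀ t : ℕ, Q t t = if t ∈ S then 1 else 0 := by
    intro t
    rw [hQdef]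
    simp only [Finset.Icc_self, Finset.mem_singleton]
    exact Finset.sum_ite_eq' S t (fun _ => 1)
  -- sums of coeffs over S agree with explicit coefficient functions
  have sumS : ∀ (β : ℕ → ℝ), β ∈ DposRoots n → ∀ c : ℕ → ℤ,
      (∑ i ∈ Icc 1 n, (c i : ℝ) • αD n i = β) →
      ∑ j ∈ S, coeffs β j = ∑ j ∈ S, c j := by
    intro β hβ c hc
    have h1 := hcoeffs β hβ
    have h2 : ∑ i ∈ Icc 1 n, (coeffs β i : ℝ) • αD n i
        = ∑ i ∈ Icc 1 n, (c i : ℝ) • αD n i := by rw [hc, ← h1]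
    exact Finset.sum_congr rfl (fun j hj => coeff_unique n hn _ _ h2 j (hS hj))
  rintro (⟨l, hl1, hl2, hγe⟩ | ⟨l, m, hl1, hlm, hmn, hγe⟩)
  · -- CASE 1 : γ = e l + e (n-1)
    have hγv : γ = e l + e (n-1) := hγe.trans (val1 n l hn hl1 hl2)
    have hγsum : ∑ j ∈ S, coeffs γ j = Q l (n-1) + Q n n := by
      rw [sumS γ hγ _ (by rw [repγ1 n l hn hl1 hl2, ← hγv]), hQdef,
        Finset.sum_add_distrib]
    have hγeven : Even (Q l (n-1) + Q n n) := by
      rw [hcompact, hγsum] at hγc; exact hγc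
    rcases hone with ⟨hn1S, hnS⟩ | ⟨hn1S, hnS⟩
    · -- α_{n-1} noncompact : γ = (e l - e n) + (e (n-1) + e n)
      refine hmin ⟨e l - e n, e (n-1) + e n,
        ⟨l, n, hl1, by omega, le_rfl, Or.inl rfl⟩,
        ⟨n-1, n, by omega, by omega, le_rfl, Or.inr rfl⟩, ?_, ?_, ?_⟩
      · rw [hcompact, sumS _ ⟨l, n, hl1, by omega, le_rfl, Or.inl rfl⟩ _
          (repMinus n l hn hl1 (by omega))]
        have hQnn : Q n n = 0 := by rw [hQsingle, if_neg hnS]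
        rw [hQnn, add_zero] at hγeven
        exact hγeven
      · rw [hcompact, sumS _ ⟨n-1, n, by omega, by omega, le_rfl, Or.inr rfl⟩ _
          (repN n hn)]
        rw [show ∑ j ∈ S, (if j ∈ Icc n n then (1:ℤ) else 0) = Q n n from rfl,
          hQsingle, if_neg hnS]
        exact Even.zero
      · rw [hγv]; abel
    · -- α_n noncompact : γ = (e l + e n) + (e (n-1) - e n)
      refine hmin ⟨e l + e n, e (n-1) - e n,
        ⟨l, n, hl1, by omega, le_rfl, Or.inr rfl⟩,
        ⟨n-1, n, by omega, by omega, le_rfl, Or.inl rfl⟩, ?_, ?_, ?_⟩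
      · rw [hcompact, sumS _ ⟨l, n, hl1, by omega, le_rfl, Or.inr rfl⟩ _
          (repPlus n l hn hl1 (by omega))]
        rw [show ∑ j ∈ S, ((if j ∈ Icc l (n-2) then (1:ℤ) else 0)
            + (if j ∈ Icc n n then 1 else 0)) = Q l (n-2) + Q n n from by
          rw [hQdef]; exact Finset.sum_add_distrib]
        have h1 : Q l (n-1) = Q l (n-2) + Q (n-1) (n-1) := by
          have := hQsplit l (n-2) (n-1) (by omega) (by omega)
          rwa [show n-2+1 = n-1 from by omega] at this
        have h2 : Q (n-1) (n-1) = 0 := by rw [hQsingle, if_neg hn1S]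
        rw [h1, h2, add_zero] at hγeven
        exact hγeven
      · rw [hcompact, sumS _ ⟨n-1, n, by omega, by omega, le_rfl, Or.inl rfl⟩ _
          (repN1 n hn)]
        rw [show ∑ j ∈ S, (if j ∈ Icc (n-1) (n-1) then (1:ℤ) else 0)
            = Q (n-1) (n-1) from rfl, hQsingle, if_neg hn1S]
        exact Even.zero
      · rw [hγv]; abel
  · -- CASE 2 : γ = e l + e m
    have hγv : γ = e l + e m := hγe.trans (val2 n l m hn hl1 hlm hmn)
    have hγsum : ∑ j ∈ S, coeffs γ j
        = Q l (m-1) + 2 * Q m (n-2) + Q (n-1) (n-1) + Q n n := by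
      rw [sumS γ hγ _ (by rw [repγ2 n l m hn hl1 hlm hmn, ← hγv]), hQdef]
      simp only [Finset.sum_add_distrib, Finset.mul_sum]
    have hγeven : Even (Q l (m-1) + 2 * Q m (n-2) + Q (n-1) (n-1) + Q n n) := by
      rw [hcompact, hγsum] at hγc; exact hγc
    -- splitting facts
    have hs1 : Q l (n-1) = Q l (m-1) + Q m (n-1) := by
      have := hQsplit l (m-1) (n-1) (by omega) (by omega)
      rwa [show m-1+1 = m from by omega] at this
    have hs2 : Q m (n-1) = Q m (n-2) + Q (n-1) (n-1) := by
      have := hQsplit m (n-2) (n-1) (by omega) (by omega)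
      rwa [show n-2+1 = n-1 from by omega] at this
    have hs3 : Q l (n-2) = Q l (m-1) + Q m (n-2) := by
      have := hQsplit l (m-1) (n-2) (by omega) (by omega)
      rwa [show m-1+1 = m from by omega] at this
    have hone' : Q (n-1) (n-1) + Q n n = 1 := by
      rcases hone with ⟨h1, h2⟩ | ⟨h1, h2⟩ <;>
        rw [hQsingle, hQsingle] <;> simp [h1, h2]
    rw [Int.even_iff] at hγeven
    rcases Int.even_or_odd (Q m (n-1)) with hq | hq
    · -- q even : γ = (e l + e n) + (e m - e n)
      rw [Int.even_iff] at hq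
      refine hmin ⟨e l + e n, e m - e n,
        ⟨l, n, hl1, by omega, le_rfl, Or.inr rfl⟩,
        ⟨m, n, by omega, by omega, le_rfl, Or.inl rfl⟩, ?_, ?_, ?_⟩
      · rw [hcompact, sumS _ ⟨l, n, hl1, by omega, le_rfl, Or.inr rfl⟩ _
          (repPlus n l hn hl1 (by omega))]
        rw [show ∑ j ∈ S, ((if j ∈ Icc l (n-2) then (1:ℤ) else 0)
            + (if j ∈ Icc n n then 1 else 0)) = Q l (n-2) + Q n n from by
          rw [hQdef]; exact Finset.sum_add_distrib]
        rw [Int.even_iff]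
        omega
      · rw [hcompact, sumS _ ⟨m, n, by omega, by omega, le_rfl, Or.inl rfl⟩ _
          (repMinus n m hn (by omega) (by omega))]
        rw [show ∑ j ∈ S, (if j ∈ Icc m (n-1) then (1:ℤ) else 0) = Q m (n-1) from rfl,
          Int.even_iff]
        omega
      · rw [hγv]; abel
    · -- q odd : γ = (e l - e n) + (e m + e n)
      rw [Int.odd_iff] at hq
      refine hmin ⟨e l - e n, e m + e n,
        ⟨l, n, hl1, by omega, le_rfl, Or.inl rfl⟩,
        ⟨m, n, by omega, by omega, le_rfl, Or.inr rfl⟩, ?_, ?_, ?_⟩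
      · rw [hcompact, sumS _ ⟨l, n, hl1, by omega, le_rfl, Or.inl rfl⟩ _
          (repMinus n l hn hl1 (by omega))]
        rw [show ∑ j ∈ S, (if j ∈ Icc l (n-1) then (1:ℤ) else 0) = Q l (n-1) from rfl,
          Int.even_iff]
        omega
      · rw [hcompact, sumS _ ⟨m, n, by omega, by omega, le_rfl, Or.inr rfl⟩ _
          (repPlus n m hn (by omega) (by omega))]
        rw [show ∑ j ∈ S, ((if j ∈ Icc m (n-2) then (1:ℤ) else 0)
            + (if j ∈ Icc n n then 1 else 0)) = Q m (n-2) + Q n n from by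
          rw [hQdef]; exact Finset.sum_add_distrib]
        rw [Int.even_iff]
        omega
      · rw [hγv]; abel
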